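/- (Appendix theorem: Accountable Safety with Acknowledgments.) Call a validator v FFG-ack-compliant w.r.t. a set V of FFG-votes and a set A of acks if its votes in V are given by a slot-indexed partial family (S_t, T_t) with T_t.c = t whenever defined and monotone sources (S_t ≤ S_{t′} whenever t ≤ t′ are both in the domain), and its acks in A are given by a slot-indexed partial family C_t with C_t.c = t whenever defined and C_t ≤ S_{t′} for every defined ack slot t and every defined vote slot t′ > t. Let V be a set of FFG-votes and A a set of acks among n validators, V₁, V₂ ⊆ V and A₁, A₂ ⊆ A. If checkpoints 𝒞₁ finalized-with-acks w.r.t. (V₁, A₁) and 𝒞₂ finalized-with-acks w.r.t. (V₂, A₂) have conflicting chains, then there exists a set W of validators with 3·|W| ≥ n such that every v ∈ W violates E1 or E2 w.r.t. V₁ ∪ V₂ or E3 w.r.t. (V₁ ∪ V₂, A₁ ∪ A₂); moreover, no validator that is FFG-ack-compliant w.r.t. (V, A) violates E1, E2, or E3 w.r.t. (V, A), so W contains no FFG-ack-compliant validator. -/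

import Mathlib

structure Block (β : Type) where
  body : β
  p : ℤ

def genesisBlock {β : Type} (g : β) : Block β := ⟨g, -1⟩

structure Chain (β : Type) (g : β) where
  blocks : List (Block β)
  ne : blocks ≠ []
  head_genesis : blocks.head? = some (genesisBlock g)
  strict : List.Chain' (fun a b => a.p < b.p) blocks

namespace Chain

variable {β : Type} {g : β}

/-- The height of a chain: the slot of its last block. -/
def height (χ : Chain β g) : ℤ := (χ.blocks.getLast χ.ne).p

/-- `χ₁ ⪯ χ₂`: `χ₁` is a prefix of `χ₂`. -/
def IsPrefix (χ₁ χ₂ : Chain β g) : Prop := χ₁.blocks <+: χ₂.blocks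

/-- Two chains conflict if neither is a prefix of the other. -/
def Conflicts (χ₁ χ₂ : Chain β g) : Prop := ¬ χ₁.IsPrefix χ₂ ∧ ¬ χ₂.IsPrefix χ₁

end Chain

def genesisChain {β : Type} (g : β) : Chain β g where
  blocks := [genesisBlock g]
  ne := by simp
  head_genesis := rfl
  strict := List.isChain_singleton _

structure Checkpoint (β : Type) (g : β) where
  chain : Chain β g
  c : ℕ
  height_le : chain.height ≤ (c : ℤ)

def genesisCheckpoint {β : Type} (g : β) : Checkpoint β g where
  chain := genesisChain g
  c := 0
  height_le := by simp [Chain.height, genesisChain, genesisBlock]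

namespace Checkpoint

variable {β : Type} {g : β}

/-- Lexicographic order on checkpoints: `𝒞 ≤ 𝒞′`. -/
def le (C C' : Checkpoint β g) : Prop :=
  C.c < C'.c ∨ (C.c = C'.c ∧ C.chain.height ≤ C'.chain.height)

/-- Strict lexicographic order on checkpoints: `𝒞 < 𝒞′`. -/
def lt (C C' : Checkpoint β g) : Prop :=
  C.c < C'.c ∨ (C.c = C'.c ∧ C.chain.height < C'.chain.height)

end Checkpoint

structure FFGVote (n : ℕ) (β : Type) (g : β) where
  source : Checkpoint β g
  target : Checkpoint β g
  sender : Fin n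

def FFGVote.Valid {n : ℕ} {β : Type} {g : β} (m : FFGVote n β g) : Prop :=
  m.source.chain.IsPrefix m.target.chain ∧ m.source.c < m.target.c

/-- The set of senders of a set of votes. -/
def senders {n : ℕ} {β : Type} {g : β} (M : Set (FFGVote n β g)) : Set (Fin n) :=
  {v | ∃ m ∈ M, m.sender = v}

/-- A checkpoint is justified w.r.t. a set of votes `V`. -/
inductive Justified {n : ℕ} {β : Type} {g : β} (V : Set (FFGVote n β g)) :
    Checkpoint β g → Prop
  | genesis : Justified V (genesisCheckpoint g)
  | step (C : Checkpoint β g) (M : Set (FFGVote n β g))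
      (hMV : M ⊆ V)
      (hcard : 2 * n ≤ 3 * (senders M).ncard)
      (hjust : ∀ m ∈ M, Justified V m.source)
      (hvotes : ∀ m ∈ M, m.Valid ∧
        m.source.chain.IsPrefix C.chain ∧ C.chain.IsPrefix m.target.chain ∧
        m.target.c = C.c) :
      Justified V C

/-- A checkpoint is finalized w.r.t. a set of votes `V`. -/
def Finalized {n : ℕ} {β : Type} {g : β} (V : Set (FFGVote n β g))
    (C : Checkpoint β g) : Prop :=
  C = genesisCheckpoint g ∨
    (Justified V C ∧ ∃ M ⊆ V, 2 * n ≤ 3 * (senders M).ncard ∧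
      ∀ m ∈ M, m.Valid ∧ m.source = C ∧ m.target.c = C.c + 1)

/-- E1 (double voting). -/
def ViolatesE1 {n : ℕ} {β : Type} {g : β} (V : Set (FFGVote n β g)) (v : Fin n) : Prop :=
  ∃ m₁ ∈ V, ∃ m₂ ∈ V, m₁.sender = v ∧ m₂.sender = v ∧ m₁ ≠ m₂ ∧
    m₁.target.c = m₂.target.c

/-- E2 (surround voting). -/
def ViolatesE2 {n : ℕ} {β : Type} {g : β} (V : Set (FFGVote n β g)) (v : Fin n) : Prop :=
  ∃ m₁ ∈ V, ∃ m₂ ∈ V, m₁.sender = v ∧ m₂.sender = v ∧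
    m₂.source.lt m₁.source ∧ m₁.target.c < m₂.target.c

structure Ack (n : ℕ) (β : Type) (g : β) where
  cp : Checkpoint β g
  sender : Fin n

/-- E3 (ack surround). -/
def ViolatesE3 {n : ℕ} {β : Type} {g : β} (V : Set (FFGVote n β g))
    (A : Set (Ack n β g)) (v : Fin n) : Prop :=
  ∃ m ∈ V, ∃ a ∈ A, m.sender = v ∧ a.sender = v ∧
    m.source.lt a.cp ∧ a.cp.c < m.target.c

/-- Finalized with acknowledgments. -/
def FinalizedWithAcks {n : ℕ} {β : Type} {g : β} (V : Set (FFGVote n β g))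
    (A : Set (Ack n β g)) (C : Checkpoint β g) : Prop :=
  Finalized V C ∨
    (Justified V C ∧ 2 * n ≤ 3 * (Set.ncard {v : Fin n | (⟨C, v⟩ : Ack n β g) ∈ A}))

/-- A validator whose votes in `V` and acks in `A` come from slot-indexed
families satisfying the honest-protocol constraints. -/
def FFGAckCompliant {n : ℕ} {β : Type} {g : β} (V : Set (FFGVote n β g))
    (A : Set (Ack n β g)) (v : Fin n) : Prop :=
  ∃ (f : ℕ → Option (Checkpoint β g × Checkpoint β g))
    (a : ℕ → Option (Checkpoint β g)),
    ({m ∈ V | m.sender = v} =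
      {m : FFGVote n β g | ∃ t S T, f t = some (S, T) ∧ m = ⟨S, T, v⟩}) ∧
    (∀ t S T, f t = some (S, T) → T.c = t) ∧
    (∀ t t' S T S' T', t ≤ t' → f t = some (S, T) → f t' = some (S', T') → S.le S') ∧
    ({ack ∈ A | ack.sender = v} =
      {ack : Ack n β g | ∃ t C, a t = some C ∧ ack = ⟨C, v⟩}) ∧
    (∀ t C, a t = some C → C.c = t) ∧
    (∀ t t' C S T, a t = some C → t < t' → f t' = some (S, T) → C.le S)

/-!
Two conflicting checkpoints cannot both be finalized-with-acks at the same slot: their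
justifying supermajorities overlap in a third of the validators, who double-voted. Otherwise
let `C₁` have the lower slot. Walk down the justification of `C₂` to the lowest justified
checkpoint `D` on `C₂`'s chain above slot `C₁.c`. Its supermajority link either starts at a
checkpoint of slot `C₁.c` conflicting with `C₁` (back to the first case) or has a source below
`C₁`; in the latter case it surrounds the finalizing link out of `C₁` (E1 or E2) or the
acknowledgments of `C₁` (E3), and again a third of the validators is caught. Compliant
validators commit none of these offences because their sources and acks are monotone in the slot.
-/

namespace Chain

variable {β : Type} {g : β}

theorem ext {χ₁ χ₂ : Chain β g} (h : χ₁.blocks = χ₂.blocks) : χ₁ = χ₂ := by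
  cases χ₁; cases χ₂; simp_all

theorem Conflicts.symm {χ₁ χ₂ : Chain β g} (h : χ₁.Conflicts χ₂) : χ₂.Conflicts χ₁ :=
  ⟨h.2, h.1⟩

theorem genesisChain_isPrefix (χ : Chain β g) : (genesisChain g).IsPrefix χ := by
  obtain ⟨blocks, ne, head, -⟩ := χ
  cases blocks with
  | nil => exact absurd rfl ne
  | cons b l =>
    obtain rfl : b = genesisBlock g := Option.some_injective _ head
    exact ⟨l, rfl⟩

theorem IsPrefix.height_lt {χ₁ χ₂ : Chain β g} (h : χ₁.IsPrefix χ₂) (hne : χ₁ ≠ χ₂) :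
    χ₁.height < χ₂.height := by
  obtain ⟨t, ht⟩ := h
  have ht_ne : t ≠ [] := by
    rintro rfl
    exact hne (ext (by simpa using ht))
  have hpair : χ₂.blocks.Pairwise (fun a b => a.p < b.p) :=
    List.isChain_iff_pairwise.mp χ₂.strict
  rw [← ht] at hpair
  have hlast : χ₂.blocks.getLast χ₂.ne = t.getLast ht_ne := by
    simp only [← ht, List.getLast_append_of_ne_nil _ ht_ne]
  unfold height
  rw [hlast]
  exact (List.pairwise_append.mp hpair).2.2 _ (List.getLast_mem _) _ (List.getLast_mem _)

theorem IsPrefix.eq_of_height_le {χ₁ χ₂ : Chain β g} (h : χ₁.IsPrefix χ₂)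
    (hle : χ₂.height ≤ χ₁.height) : χ₁ = χ₂ := by
  by_contra hne
  exact (h.height_lt hne).not_ge hle

end Chain

namespace Checkpoint

variable {β : Type} {g : β}

theorem not_lt_of_le {C C' : Checkpoint β g} (h : C.le C') : ¬ C'.lt C := by
  rcases h with h | ⟨h, h'⟩ <;> rintro (k | ⟨k, k'⟩) <;> omega

theorem lt_irrefl (C : Checkpoint β g) : ¬ C.lt C := by
  rintro (h | ⟨-, h⟩) <;> omega

theorem ne_genesis_of_conflicts {C : Checkpoint β g} {χ : Chain β g}
    (hconf : C.chain.Conflicts χ) : C ≠ genesisCheckpoint g := by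
  rintro rfl
  exact hconf.1 (Chain.genesisChain_isPrefix χ)

theorem conflicts_of_isPrefix_of_not_lt {S C : Checkpoint β g} {χ : Chain β g}
    (hS : S.chain.IsPrefix χ) (hconf : C.chain.Conflicts χ) (hc : S.c = C.c)
    (hnlt : ¬ S.lt C) : S.chain.Conflicts C.chain := by
  refine ⟨fun hSC => ?_, fun hCS => hconf.1 (List.IsPrefix.trans hCS hS)⟩
  have hheight : C.chain.height ≤ S.chain.height :=
    not_lt.mp fun hlt => hnlt (Or.inr ⟨hc, hlt⟩)
  exact hconf.1 (hSC.eq_of_height_le hheight ▸ hS)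

end Checkpoint

theorem le_three_mul_ncard_inter {α : Type*} [Finite α] {S T : Set α}
    (hS : 2 * Nat.card α ≤ 3 * S.ncard) (hT : 2 * Nat.card α ≤ 3 * T.ncard) :
    Nat.card α ≤ 3 * (S ∩ T).ncard := by
  have hunion : (S ∪ T).ncard ≤ Nat.card α := by
    simpa using Set.ncard_le_ncard (Set.subset_univ (S ∪ T))
  have := Set.ncard_inter_add_ncard_union S T
  omega

section Slashing

variable {n : ℕ} {β : Type} {g : β}

def Slashable (V : Set (FFGVote n β g)) (A : Set (Ack n β g)) (v : Fin n) : Prop :=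
  ViolatesE1 V v ∨ ViolatesE2 V v ∨ ViolatesE3 V A v

def SlashableQuorum (V : Set (FFGVote n β g)) (A : Set (Ack n β g)) : Prop :=
  ∃ W : Set (Fin n), n ≤ 3 * W.ncard ∧ ∀ v ∈ W, Slashable V A v

theorem Slashable.mono {V V' : Set (FFGVote n β g)} {A A' : Set (Ack n β g)} {v : Fin n}
    (h : Slashable V A v) (hV : V ⊆ V') (hA : A ⊆ A') : Slashable V' A' v := by
  rcases h with ⟨m₁, h₁, m₂, h₂, h⟩ | ⟨m₁, h₁, m₂, h₂, h⟩ | ⟨m, hm, a, ha, h⟩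
  · exact Or.inl ⟨m₁, hV h₁, m₂, hV h₂, h⟩
  · exact Or.inr (Or.inl ⟨m₁, hV h₁, m₂, hV h₂, h⟩)
  · exact Or.inr (Or.inr ⟨m, hV hm, a, hA ha, h⟩)

theorem SlashableQuorum.mono {V V' : Set (FFGVote n β g)} {A A' : Set (Ack n β g)}
    (h : SlashableQuorum V A) (hV : V ⊆ V') (hA : A ⊆ A') : SlashableQuorum V' A' :=
  let ⟨W, hW, hWs⟩ := h
  ⟨W, hW, fun v hv => (hWs v hv).mono hV hA⟩

theorem le_three_mul_ncard_inter_of_fin {S T : Set (Fin n)}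
    (hS : 2 * n ≤ 3 * S.ncard) (hT : 2 * n ≤ 3 * T.ncard) : n ≤ 3 * (S ∩ T).ncard := by
  simpa using le_three_mul_ncard_inter (α := Fin n) (by simpa using hS) (by simpa using hT)

theorem slashableQuorum_of_justified_conflicts_of_c_eq {Va Vb : Set (FFGVote n β g)}
    {A : Set (Ack n β g)} {X Y : Checkpoint β g} (hX : Justified Va X) (hY : Justified Vb Y)
    (hc : X.c = Y.c) (hconf : X.chain.Conflicts Y.chain) : SlashableQuorum (Va ∪ Vb) A := by
  cases hX with
  | genesis => exact absurd rfl (Checkpoint.ne_genesis_of_conflicts hconf)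
  | step X M₁ hMV₁ hcard₁ _ hvotes₁ =>
  cases hY with
  | genesis => exact absurd rfl (Checkpoint.ne_genesis_of_conflicts hconf.symm)
  | step Y M₂ hMV₂ hcard₂ _ hvotes₂ =>
  refine ⟨senders M₁ ∩ senders M₂, le_three_mul_ncard_inter_of_fin hcard₁ hcard₂, ?_⟩
  rintro v ⟨⟨m₁, hm₁, hs₁⟩, ⟨m₂, hm₂, hs₂⟩⟩
  obtain ⟨-, -, hXm₁, hc₁⟩ := hvotes₁ m₁ hm₁
  obtain ⟨-, -, hYm₂, hc₂⟩ := hvotes₂ m₂ hm₂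
  refine Or.inl ⟨m₁, Or.inl (hMV₁ hm₁), m₂, Or.inr (hMV₂ hm₂), hs₁, hs₂, ?_, by omega⟩
  rintro rfl
  rcases List.prefix_or_prefix_of_prefix hXm₁ hYm₂ with h | h
  · exact hconf.1 h
  · exact hconf.2 h

/-- What finality adds to justification in `FinalizedWithAcks`. -/
def FinalityCertificate (V : Set (FFGVote n β g)) (A : Set (Ack n β g))
    (C : Checkpoint β g) : Prop :=
  (∃ Q ⊆ V, 2 * n ≤ 3 * (senders Q).ncard ∧
      ∀ q ∈ Q, q.Valid ∧ q.source = C ∧ q.target.c = C.c + 1) ∨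
    2 * n ≤ 3 * (Set.ncard {v : Fin n | (⟨C, v⟩ : Ack n β g) ∈ A})

theorem FinalizedWithAcks.justified_and_certificate {V : Set (FFGVote n β g)}
    {A : Set (Ack n β g)} {C : Checkpoint β g} (h : FinalizedWithAcks V A C)
    (hC : C ≠ genesisCheckpoint g) : Justified V C ∧ FinalityCertificate V A C := by
  rcases h with (h | ⟨hJ, hQ⟩) | ⟨hJ, hacks⟩
  · exact absurd h hC
  · exact ⟨hJ, Or.inl hQ⟩
  · exact ⟨hJ, Or.inr hacks⟩

theorem slashableQuorum_of_surrounding_votes {Va Vb M : Set (FFGVote n β g)}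
    {A : Set (Ack n β g)} {C : Checkpoint β g} (hcert : FinalityCertificate Va A C)
    (hMV : M ⊆ Vb) (hM : 2 * n ≤ 3 * (senders M).ncard)
    (hsurround : ∀ m ∈ M, m.source.lt C ∧ C.c < m.target.c) :
    SlashableQuorum (Va ∪ Vb) A := by
  rcases hcert with ⟨Q, hQV, hQ, hQvotes⟩ | hacks
  · refine ⟨senders M ∩ senders Q, le_three_mul_ncard_inter_of_fin hM hQ, ?_⟩
    rintro v ⟨⟨m, hm, hs⟩, ⟨q, hq, hqs⟩⟩
    obtain ⟨hmsrc, hmtgt⟩ := hsurround m hm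
    obtain ⟨-, rfl, hqtgt⟩ := hQvotes q hq
    rcases Nat.lt_or_ge (q.source.c + 1) m.target.c with hlt | hle
    · exact Or.inr (Or.inl ⟨q, Or.inl (hQV hq), m, Or.inr (hMV hm), hqs, hs, hmsrc, by omega⟩)
    · refine Or.inl ⟨m, Or.inr (hMV hm), q, Or.inl (hQV hq), hs, hqs, ?_, by omega⟩
      rintro rfl
      exact Checkpoint.lt_irrefl _ hmsrc
  · refine ⟨senders M ∩ {v | (⟨C, v⟩ : Ack n β g) ∈ A},
      le_three_mul_ncard_inter_of_fin hM hacks, ?_⟩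
    rintro v ⟨⟨m, hm, hs⟩, ha⟩
    exact Or.inr (Or.inr ⟨m, Or.inr (hMV hm), ⟨C, v⟩, ha, hs, rfl, hsurround m hm⟩)

theorem slashableQuorum_of_justified_above {Va Vb : Set (FFGVote n β g)}
    {A : Set (Ack n β g)} {C₁ C₂ D : Checkpoint β g} (hJ : Justified Va C₁)
    (hcert : FinalityCertificate Va A C₁) (hconf : C₁.chain.Conflicts C₂.chain)
    (hD : Justified Vb D) (hDC : D.chain.IsPrefix C₂.chain) (hlt : C₁.c < D.c) :
    SlashableQuorum (Va ∪ Vb) A := by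
  induction hD with
  | genesis => exact absurd hlt (by simp [genesisCheckpoint])
  | step D M hMV hM hjust hvotes ih =>
    have hsrc m (hm : m ∈ M) : m.source.chain.IsPrefix C₂.chain :=
      List.IsPrefix.trans (hvotes m hm).2.1 hDC
    by_cases hhigh : ∃ m ∈ M, C₁.c < m.source.c
    · obtain ⟨m, hm, hmc⟩ := hhigh
      exact ih m hm (hsrc m hm) hmc
    push Not at hhigh
    by_cases hnlt : ∃ m ∈ M, ¬ m.source.lt C₁
    · obtain ⟨m, hm, hmC⟩ := hnlt
      have hc : m.source.c = C₁.c := (hhigh m hm).eq_or_lt.resolve_right fun h => hmC (Or.inl h)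
      exact slashableQuorum_of_justified_conflicts_of_c_eq hJ (hjust m hm) hc.symm
        (Checkpoint.conflicts_of_isPrefix_of_not_lt (hsrc m hm) hconf hc hmC).symm
    push Not at hnlt
    exact slashableQuorum_of_surrounding_votes hcert hMV hM
      fun m hm => ⟨hnlt m hm, (hvotes m hm).2.2.2 ▸ hlt⟩

end Slashing

section Compliance

variable {n : ℕ} {β : Type} {g : β}

theorem FFGVote.ext {m m' : FFGVote n β g} (hS : m.source = m'.source)
    (hT : m.target = m'.target) (hv : m.sender = m'.sender) : m = m' := by
  cases m; cases m'; simp_all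

theorem vote_family_apply_target_c {V : Set (FFGVote n β g)} {v : Fin n}
    {f : ℕ → Option (Checkpoint β g × Checkpoint β g)}
    (hV : {m ∈ V | m.sender = v} =
      {m : FFGVote n β g | ∃ t S T, f t = some (S, T) ∧ m = ⟨S, T, v⟩})
    (hTc : ∀ t S T, f t = some (S, T) → T.c = t) {m : FFGVote n β g} (hm : m ∈ V)
    (hs : m.sender = v) : f m.target.c = some (m.source, m.target) := by
  have hmem : m ∈ {m ∈ V | m.sender = v} := ⟨hm, hs⟩
  rw [hV] at hmem
  obtain ⟨t, S, T, hf, rfl⟩ := hmem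
  rwa [hTc t S T hf]

theorem ack_family_apply_c {A : Set (Ack n β g)} {v : Fin n}
    {a : ℕ → Option (Checkpoint β g)}
    (hA : {ack ∈ A | ack.sender = v} =
      {ack : Ack n β g | ∃ t C, a t = some C ∧ ack = ⟨C, v⟩})
    (hc : ∀ t C, a t = some C → C.c = t) {ack : Ack n β g} (hack : ack ∈ A)
    (hs : ack.sender = v) : a ack.cp.c = some ack.cp := by
  have hmem : ack ∈ {ack ∈ A | ack.sender = v} := ⟨hack, hs⟩
  rw [hA] at hmem
  obtain ⟨t, C, ha, rfl⟩ := hmem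
  rwa [hc t C ha]

theorem FFGAckCompliant.not_slashable {V : Set (FFGVote n β g)} {A : Set (Ack n β g)}
    {v : Fin n} (h : FFGAckCompliant V A v) : ¬ Slashable V A v := by
  obtain ⟨f, a, hV, hTc, hmono, hA, hac, hale⟩ := h
  have vote {m} (hm : m ∈ V) (hs : m.sender = v) := vote_family_apply_target_c hV hTc hm hs
  have ack {ak} (hak : ak ∈ A) (hs : ak.sender = v) := ack_family_apply_c hA hac hak hs
  rintro (⟨m₁, h₁, m₂, h₂, hs₁, hs₂, hne, hc⟩ | ⟨m₁, h₁, m₂, h₂, hs₁, hs₂, hlt, hc⟩ |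
      ⟨m, hm, ak, hak, hs, has, hlt, hc⟩)
  · have hf := (vote h₁ hs₁).symm.trans (hc ▸ vote h₂ hs₂)
    simp only [Option.some_inj, Prod.mk.injEq] at hf
    exact hne (FFGVote.ext hf.1 hf.2 (hs₁.trans hs₂.symm))
  · exact Checkpoint.not_lt_of_le (hmono _ _ _ _ _ _ hc.le (vote h₁ hs₁) (vote h₂ hs₂)) hlt
  · exact Checkpoint.not_lt_of_le (hale _ _ _ _ _ (ack hak has) hc (vote hm hs)) hlt

end Compliance

/-- Accountable Safety with Acknowledgments. -/
theorem accountable_safety_with_acks_n_over_three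
    {n : ℕ} {β : Type} {g : β} (V : Set (FFGVote n β g)) (A : Set (Ack n β g))
    (V₁ V₂ : Set (FFGVote n β g)) (A₁ A₂ : Set (Ack n β g))
    (hV₁ : V₁ ⊆ V) (hV₂ : V₂ ⊆ V) (hA₁ : A₁ ⊆ A) (hA₂ : A₂ ⊆ A)
    (C₁ C₂ : Checkpoint β g)
    (h₁ : FinalizedWithAcks V₁ A₁ C₁) (h₂ : FinalizedWithAcks V₂ A₂ C₂)
    (hconf : C₁.chain.Conflicts C₂.chain) :
    (∃ W : Set (Fin n), n ≤ 3 * W.ncard ∧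
      (∀ v ∈ W, ViolatesE1 (V₁ ∪ V₂) v ∨ ViolatesE2 (V₁ ∪ V₂) v ∨
        ViolatesE3 (V₁ ∪ V₂) (A₁ ∪ A₂) v) ∧
      (∀ v ∈ W, ¬ FFGAckCompliant V A v)) ∧
    (∀ v : Fin n, FFGAckCompliant V A v →
      ¬ (ViolatesE1 V v ∨ ViolatesE2 V v ∨ ViolatesE3 V A v)) := by
  obtain ⟨hJ₁, hcert₁⟩ :=
    h₁.justified_and_certificate (Checkpoint.ne_genesis_of_conflicts hconf)
  obtain ⟨hJ₂, hcert₂⟩ :=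
    h₂.justified_and_certificate (Checkpoint.ne_genesis_of_conflicts hconf.symm)
  have hquorum : SlashableQuorum (V₁ ∪ V₂) (A₁ ∪ A₂) := by
    rcases lt_trichotomy C₁.c C₂.c with hlt | heq | hgt
    · exact (slashableQuorum_of_justified_above hJ₁ hcert₁ hconf hJ₂ List.prefix_rfl hlt).mono
        subset_rfl Set.subset_union_left
    · exact slashableQuorum_of_justified_conflicts_of_c_eq hJ₁ hJ₂ heq hconf
    · exact (slashableQuorum_of_justified_above hJ₂ hcert₂ hconf.symm hJ₁ List.prefix_rfl
        hgt).mono (Set.union_comm _ _).le Set.subset_union_right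
  obtain ⟨W, hW, hWs⟩ := hquorum
  refine ⟨⟨W, hW, hWs, fun v hv hcompliant => hcompliant.not_slashable ?_⟩,
    fun v hcompliant => hcompliant.not_slashable⟩
  exact (hWs v hv).mono (Set.union_subset hV₁ hV₂) (Set.union_subset hA₁ hA₂)
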